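/- Let (R, m, k) be a one-dimensional Cohen–Macaulay local ring with infinite residue field admitting a canonical module ω_R with R ⊆ ω_R ⊆ R̄. If R is not Gorenstein and α ∈ m satisfies α m = m², then (R:ω_R):m = { m/α : m ∈ R:ω_R } (as subsets of Q(R)). -/

import Mathlib

/- Common definitions: fractional ideals in the total ring of fractions, canonical
ideals (via the Herzog–Kunz criterion), reductions, (almost) canonical ideals and
(almost) Gorenstein rings, for one-dimensional Cohen–Macaulay rings.
Throughout, the total ring of fractions `Q(R)` is `FractionRing R` and fractional
ideals are submodules of it. -/

set_option maxHeartbeats 1600000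
set_option synthInstance.maxHeartbeats 800000

noncomputable section

open IsLocalRing Submodule

variable (T A : Type*) [CommRing T] [CommRing A] [Algebra T A]

/-- The submodule of the `T`-algebra `A` generated by the image of an ideal of `T`. -/
def idealSub (I : Ideal T) : Submodule T A := Submodule.map (Algebra.linearMap T A) I

/-- The maximal ideal of the local ring `T`, viewed inside `A`. -/
def maxSub [IsLocalRing T] : Submodule T A := idealSub T A (maximalIdeal T)

/-- The Jacobson radical of `T`, viewed inside `A`. -/
def jacSub : Submodule T A := Submodule.map (Algebra.linearMap T A) ((⊥ : Ideal T).jacobson)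

/-- The integral closure of `T` in `A`, as a submodule of `A`. -/
def intCl : Submodule T A := Subalgebra.toSubmodule (integralClosure T A)

/-- `I` is a fractional ideal of `T` inside `A` (`A` playing the role of the total ring
of fractions of `T`): `I` contains an invertible element and has bounded denominators. -/
def IsFracIdeal (I : Submodule T A) : Prop :=
  (∃ u : Aˣ, (u : A) ∈ I) ∧ ∃ r ∈ nonZeroDivisors T, ∀ x ∈ I, r • x ∈ (1 : Submodule T A)

/-- The length `ℓ_T(N/I)` of the subquotient `N/(I ∩ N)`, defined as the Krull dimension
of its lattice of submodules. -/
def relLength (I N : Submodule T A) : WithBot ℕ∞ :=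
  Order.krullDim (Submodule T (↥N ⧸ (I.comap N.subtype)))

/-- Herzog–Kunz criterion: a fractional ideal `ω` of `T` is a canonical module of `T` iff
`ℓ_T((ω : n)/ω) = 1` for every maximal ideal `n` of `T`. -/
def IsCanonicalIdeal (ω : Submodule T A) : Prop :=
  IsFracIdeal T A ω ∧ ∀ n : Ideal T, n.IsMaximal → relLength T A ω (ω / idealSub T A n) = 1

/-- `z ∈ J` is a reduction of the fractional ideal `J`: `z J^n = J^{n+1}` for some `n`. -/
def IsReductionOf (z : A) (J : Submodule T A) : Prop :=
  z ∈ J ∧ ∃ n : ℕ, J ^ (n + 1) = span T {z} * J ^ n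

/-- Almost canonical ideal over a local ring `T` (with respect to a canonical module `ω`,
`T ⊆ ω ⊆ T̄`): for a (regular) reduction `z` of `ω : I` one has `ω : (m:m) ⊆ zI`. -/
def IsAlmostCanonicalLoc [IsLocalRing T] (ω I : Submodule T A) : Prop :=
  ∃ z : A, IsUnit z ∧ IsReductionOf T A z (ω / I) ∧
    ω / (maxSub T A / maxSub T A) ≤ span T {z} * I

/-- The `Localization p`-algebra structure on `LocalizedModule p A` (a global instance,
`LocalizedModule.algebra`, in older Mathlib). -/
abbrev localizedModuleAlgebraOld (p : Submonoid T) :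
    Algebra (Localization p) (LocalizedModule p A) :=
  Algebra.ofModule (fun r x y => by
      induction r using OreLocalization.ind with | _ r s => ?_
      induction x using OreLocalization.ind with | _ a t => ?_
      induction y using OreLocalization.ind with | _ b u => ?_
      change (Localization.mk r s • LocalizedModule.mk a t) * LocalizedModule.mk b u =
        Localization.mk r s • (LocalizedModule.mk a t * LocalizedModule.mk b u)
      rw [LocalizedModule.mk_smul_mk, LocalizedModule.mk_mul_mk, LocalizedModule.mk_mul_mk,
        LocalizedModule.mk_smul_mk, smul_mul_assoc, mul_assoc])
    (fun r x y => by
      induction r using OreLocalization.ind with | _ r s => ?_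
      induction x using OreLocalization.ind with | _ a t => ?_
      induction y using OreLocalization.ind with | _ b u => ?_
      change LocalizedModule.mk a t * (Localization.mk r s • LocalizedModule.mk b u) =
        Localization.mk r s • (LocalizedModule.mk a t * LocalizedModule.mk b u)
      rw [LocalizedModule.mk_smul_mk, LocalizedModule.mk_mul_mk, LocalizedModule.mk_mul_mk,
        LocalizedModule.mk_smul_mk, mul_smul_comm, mul_left_comm])

/-- Almost canonical ideal over a (not necessarily local) ring: the localization at every
maximal ideal is an almost canonical ideal of the localized ring. -/
def IsAlmostCanonical (ω I : Submodule T A) : Prop :=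
  ∀ (p : Ideal T) (hp : p.IsMaximal),
    letI := hp.isPrime
    letI := localizedModuleAlgebraOld T A p.primeCompl
    IsAlmostCanonicalLoc (Localization.AtPrime p) (LocalizedModule p.primeCompl A)
      (ω.localized p.primeCompl) (I.localized p.primeCompl)

/-- `S` is a discrete valuation ring. -/
def IsDVR (S : Type*) [CommRing S] : Prop :=
  ∃ h : IsDomain S, @IsDiscreteValuationRing S _ h

/-- A one-dimensional Cohen–Macaulay local ring `S` is almost Gorenstein if `m ω ⊆ m`
for a canonical module `S ⊆ ω ⊆ S̄` of `S`. -/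
def IsAlmostGorensteinLoc (S : Type*) [CommRing S] [IsLocalRing S] : Prop :=
  ∃ ω : Submodule S (FractionRing S),
    IsCanonicalIdeal S (FractionRing S) ω ∧ 1 ≤ ω ∧
      ω ≤ intCl S (FractionRing S) ∧
      maxSub S (FractionRing S) * ω ≤ maxSub S (FractionRing S)

/-- A ring is almost Gorenstein if its localization at every maximal ideal is. -/
def IsAlmostGorenstein (S : Type*) [CommRing S] : Prop :=
  ∀ (p : Ideal S) (hp : p.IsMaximal),
    letI := hp.isPrime
    IsAlmostGorensteinLoc (Localization.AtPrime p)

/-- A minimal system of generators of the maximal ideal of a local ring. -/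
def IsMinGenSys (S : Type*) [CommRing S] [IsLocalRing S] {n : ℕ} (g : Fin n → S) : Prop :=
  Ideal.span (Set.range g) = maximalIdeal S ∧
    ∀ i : Fin n, Ideal.span (g '' {j | j ≠ i}) ≠ maximalIdeal S

/-- `R` is a generalized almost Gorenstein local (gAGL) ring, with respect to the
canonical module `ω` and the ring `B = m:m`: `m ω J(B) ⊆ R`. -/
def IsGAGL (R : Type*) [CommRing R] [IsLocalRing R] (ω : Submodule R (FractionRing R))
    (B : Subalgebra R (FractionRing R)) : Prop :=
  maxSub R (FractionRing R) * ω *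
      ((jacSub ↥B (FractionRing R)).restrictScalars R) ≤ 1

/-- `1` is a reduction of the localization `J_p` of the fractional ideal `J` at the
submonoid `p` (for `p` the complement of a maximal ideal, this is the localization of
`J` at that maximal ideal): `1 ∈ J_p` and `(J_p)^{n+1} = (J_p)^n` for some `n`. -/
def IsOneReductionOfLocalization (p : Submonoid T) (J : Submodule T A) : Prop :=
  letI := localizedModuleAlgebraOld T A p
  (1 : LocalizedModule p A) ∈ J.localized p ∧
    ∃ n : ℕ, (J.localized p) ^ (n + 1) = (J.localized p) ^ n

/-! The ideal `K = R:ω` satisfies `Kω ⊆ m`: if `kw` were a unit for some `k ∈ K`, `w ∈ ω`, then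
`w` would be an element of `R̄` whose inverse lies in `R`, hence `w ∈ R`, and `ω ⊆ w(kω) ⊆ R`.
So if `αx ∈ K`, then for `t ∈ m` and `w ∈ ω` we get `α(xtw) = t(αxw) ∈ m² = αm`, and cancelling
the nonzerodivisor `α` gives `xtw ∈ R`, i.e. `x ∈ K:m`. -/

section Colon

variable {R A : Type*} [CommRing R] [CommRing A] [Algebra R A]

open Polynomial in
theorem exists_algebraMap_eq_of_isIntegral_of_mul_eq_one {w : A} {s : R} (hw : IsIntegral R w)
    (hws : w * algebraMap R A s = 1) : ∃ c : R, algebraMap R A c = w := by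
  obtain ⟨p, hp, hpw⟩ := hw
  let : Invertible w := ⟨algebraMap R A s, by rw [mul_comm, hws], hws⟩
  -- `s = w⁻¹` is a root of the reversed polynomial, whose constant term is `1`.
  have hrev : algebraMap R A (p.reverse.eval s) = 0 := by
    rw [← eval₂_at_apply]; exact (eval₂_reverse_eq_zero_iff _ w p).mpr hpw
  have hsplit : p.reverse.eval s = s * p.reverse.divX.eval s + 1 := by
    conv_lhs => rw [← X_mul_divX_add p.reverse]
    rw [coeff_zero_reverse, hp.leadingCoeff, eval_add, eval_mul, eval_X, eval_C]
  rw [hsplit, map_add, map_mul, map_one] at hrev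
  refine ⟨-p.reverse.divX.eval s, ?_⟩
  rw [map_neg]
  linear_combination algebraMap R A (p.reverse.divX.eval s) * hws - w * hrev

theorem mem_nonZeroDivisors_of_span_mul_eq_sq {I : Ideal R} {x α : R} (hxI : x ∈ I)
    (hx : x ∈ nonZeroDivisors R) (hα : Ideal.span {α} * I = I ^ 2) :
    α ∈ nonZeroDivisors R := by
  have hxx : x * x ∈ Ideal.span {α} * I := by
    rw [hα, pow_two]; exact Ideal.mul_mem_mul hxI hxI
  obtain ⟨t, -, ht⟩ := Ideal.mem_span_singleton_mul.mp hxx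
  have : α * t ∈ nonZeroDivisors R := ht ▸ mul_mem_nonZeroDivisors.mpr ⟨hx, hx⟩
  exact (mul_mem_nonZeroDivisors.mp this).1

theorem le_one_of_mem_div_of_mul_eq_one {ω : Submodule R A} (hω1 : 1 ≤ ω) {k w : A}
    (hk : k ∈ 1 / ω) (hw : w ∈ ω) (hwint : IsIntegral R w) (hkw : k * w = 1) : ω ≤ 1 := by
  have hk1 : k ∈ (1 : Submodule R A) := by
    simpa using mem_div_iff_forall_mul_mem.mp hk 1 (hω1 (one_le.mp le_rfl))
  obtain ⟨s, rfl⟩ := mem_one.mp hk1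
  obtain ⟨c, rfl⟩ :=
    exists_algebraMap_eq_of_isIntegral_of_mul_eq_one hwint (by rw [mul_comm, hkw])
  intro w' hw'
  obtain ⟨t, ht⟩ := mem_one.mp (mem_div_iff_forall_mul_mem.mp hk w' hw')
  refine mem_one.mpr ⟨c * t, ?_⟩
  rw [map_mul, ht, ← mul_assoc, mul_comm (algebraMap R A c), hkw, one_mul]

variable [IsLocalRing R]

theorem div_mul_le_maxSub {ω : Submodule R A} (hω1 : 1 ≤ ω) (hω2 : ω ≤ intCl R A)
    (hω : ω ≠ 1) : 1 / ω * ω ≤ maxSub R A := by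
  refine mul_le.mpr fun k hk w hw => ?_
  obtain ⟨r, hr⟩ := mem_one.mp (mem_div_iff_forall_mul_mem.mp hk w hw)
  by_cases hrm : r ∈ maximalIdeal R
  · exact mem_map.mpr ⟨r, hrm, hr⟩
  obtain ⟨u, rfl⟩ := notMem_maximalIdeal.mp hrm
  refine absurd (le_antisymm ?_ hω1) hω
  refine le_one_of_mem_div_of_mul_eq_one hω1 (smul_mem _ (↑u⁻¹ : R) hk) hw
    ((Subalgebra.mem_toSubmodule _).mp (hω2 hw)) ?_
  rw [smul_mul_assoc, ← hr, Algebra.smul_def, ← map_mul, Units.inv_mul, map_one]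

theorem mem_div_maxSub_iff {J : Submodule R A} (hJ : 1 / J * J ≤ maxSub R A) {α : R}
    (hα : α ∈ maximalIdeal R) (hαu : IsUnit (algebraMap R A α))
    (hmin : Ideal.span {α} * maximalIdeal R = maximalIdeal R ^ 2) {x : A} :
    x ∈ 1 / J / maxSub R A ↔ algebraMap R A α * x ∈ 1 / J := by
  refine ⟨fun hx => mul_comm x _ ▸ mem_div_iff_forall_mul_mem.mp hx _ (mem_map_of_mem hα),
    fun hx => mem_div_iff_forall_mul_mem.mpr fun y hy => ?_⟩
  obtain ⟨t, ht, rfl⟩ := mem_map.mp hy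
  refine mem_div_iff_forall_mul_mem.mpr fun w hw => ?_
  obtain ⟨s, hs, hsw⟩ := mem_map.mp (hJ (mul_mem_mul hx hw))
  have hts : t * s ∈ Ideal.span {α} * maximalIdeal R := by
    rw [hmin, pow_two]; exact Ideal.mul_mem_mul ht hs
  obtain ⟨t', -, ht'⟩ := Ideal.mem_span_singleton_mul.mp hts
  refine mem_one.mpr ⟨t', hαu.mul_left_cancel ?_⟩
  simp only [Algebra.linearMap_apply] at hsw ⊢
  rw [← map_mul, ht', map_mul, hsw]
  ring

end Colon

theorem stmt9_general (R : Type*) [CommRing R] [IsLocalRing R]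
    (hCM : ∃ x ∈ maximalIdeal R, x ∈ nonZeroDivisors R)
    (ω : Submodule R (FractionRing R))
    (hω1 : 1 ≤ ω)
    (hω2 : ω ≤ intCl R (FractionRing R))
    (hnotGor : ω ≠ 1)
    (α : R) (hα : α ∈ maximalIdeal R)
    (hmin : Ideal.span {α} * maximalIdeal R = maximalIdeal R ^ 2) :
    ((((1 : Submodule R (FractionRing R)) / ω) / maxSub R (FractionRing R) :
        Submodule R (FractionRing R)) : Set (FractionRing R)) =
      {x : FractionRing R |
        algebraMap R (FractionRing R) α * x ∈ (1 : Submodule R (FractionRing R)) / ω} := by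
  obtain ⟨x, hxm, hx⟩ := hCM
  have hαreg : α ∈ nonZeroDivisors R := mem_nonZeroDivisors_of_span_mul_eq_sq hxm hx hmin
  have hαu : IsUnit (algebraMap R (FractionRing R) α) :=
    IsLocalization.map_units (FractionRing R) (⟨α, hαreg⟩ : nonZeroDivisors R)
  ext y
  exact mem_div_maxSub_iff (div_mul_le_maxSub hω1 hω2 hnotGor) hα hαu hmin

/-- Lemma `R:omega^2`(2): if `R` is not Gorenstein and `α m = m²`, then
`(R:ω):m = { m/α : m ∈ R:ω }`. -/
theorem stmt9 (R : Type*) [CommRing R] [IsLocalRing R] [IsNoetherianRing R]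
    (hdim : ringKrullDim R = 1)
    (hCM : ∃ x ∈ maximalIdeal R, x ∈ nonZeroDivisors R)
    (hres : Infinite (ResidueField R))
    (ω : Submodule R (FractionRing R))
    (hω : IsCanonicalIdeal R (FractionRing R) ω) (hω1 : 1 ≤ ω)
    (hω2 : ω ≤ intCl R (FractionRing R))
    (hnotGor : ω ≠ 1)
    (α : R) (hα : α ∈ maximalIdeal R)
    (hmin : Ideal.span {α} * maximalIdeal R = maximalIdeal R ^ 2) :
    ((((1 : Submodule R (FractionRing R)) / ω) / maxSub R (FractionRing R) :
        Submodule R (FractionRing R)) : Set (FractionRing R)) =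
      {x : FractionRing R |
        algebraMap R (FractionRing R) α * x ∈ (1 : Submodule R (FractionRing R)) / ω} :=
  stmt9_general R hCM ω hω1 hω2 hnotGor α hα hmin
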